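/- arXiv:1404.2963 — 3 statements merged into one kernel-verified Lean document; each statement's English description precedes it below -/
import Mathlib

section
/- Let ω be a homogeneous 1-form of degree e with i_R(ω) = 0, and let (h, η) be a pair consisting of a homogeneous polynomial h and a homogeneous 1-form η, both of degree a, satisfying a·h·dω = e·ω ∧ (η − dh). Then i_R(η) = 0. -/
open MvPolynomial Finset

noncomputable section

/-- An `r`-form on `ℂ^m` with polynomial coefficients, represented by its
(intendedly alternating) coefficient function `(i₁,…,i_r) ↦ τ_{i₁…i_r}`. -/
abbrev Form (m r : ℕ) : Type := (Fin r → Fin m) → MvPolynomial (Fin m) ℂ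

/-- The coefficient function is alternating. -/
def IsAlt {m r : ℕ} (τ : Form m r) : Prop :=
  ∀ (f : Fin r → Fin m) (σ : Equiv.Perm (Fin r)),
    τ (f ∘ σ) = ((Equiv.Perm.sign σ : ℤˣ) : ℤ) • τ f

/-- `τ` is a homogeneous `r`-form of total degree `p` (each `xᵢ` and each `dxᵢ`
has degree `1`, so the polynomial coefficients are homogeneous of degree `p - r`). -/
def IsHomog {m : ℕ} (r p : ℕ) (τ : Form m r) : Prop :=
  ∀ f, (τ f).IsHomogeneous (p - r)

/-- Wedge product of forms (antisymmetrized product). -/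
def wedge {m r s : ℕ} (τ : Form m r) (σ : Form m s) : Form m (r + s) :=
  fun f => (((r.factorial * s.factorial : ℕ) : ℂ))⁻¹ •
    ∑ π : Equiv.Perm (Fin (r + s)),
      ((Equiv.Perm.sign π : ℤˣ) : ℤ) •
        (τ (fun i => f (π (Fin.castAdd s i))) * σ (fun j => f (π (Fin.natAdd r j))))

/-- Exterior derivative. -/
def extd {m r : ℕ} (τ : Form m r) : Form m (r + 1) :=
  fun f => ∑ i : Fin (r + 1),
    (-1 : ℤ) ^ (i : ℕ) • MvPolynomial.pderiv (f i) (τ (f ∘ i.succAbove))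

/-- Contraction (interior product) with the radial vector field `R = Σ xᵢ ∂/∂xᵢ`. -/
def ctr {m r : ℕ} (τ : Form m (r + 1)) : Form m r :=
  fun f => ∑ j : Fin m, MvPolynomial.X j * τ (Fin.cons j f)

/-- Contraction with a polynomial vector field `X = Σ Xᵢ ∂/∂xᵢ`. -/
def ctrX {m r : ℕ} (X : Fin m → MvPolynomial (Fin m) ℂ) (τ : Form m (r + 1)) : Form m r :=
  fun f => ∑ j : Fin m, X j * τ (Fin.cons j f)

/-- A polynomial regarded as a `0`-form. -/
def const {m : ℕ} (h : MvPolynomial (Fin m) ℂ) : Form m 0 := fun _ => h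

/-- Reindexing a form along an equality of ranks. -/
def castF {m r s : ℕ} (h : r = s) (τ : Form m r) : Form m s :=
  fun f => τ (f ∘ Fin.cast h)

/-- `d (i_R τ)`, defined for forms of any rank (it is `0` on `0`-forms). -/
def dIR {m : ℕ} : {r : ℕ} → Form m r → Form m r
  | 0, _ => 0
  | _ + 1, τ => extd (ctr τ)

/-- `i_R (d τ)`, defined for forms of any rank. -/
def iRd {m r : ℕ} (τ : Form m r) : Form m r := ctr (extd τ)

/-- The operator `ω △ τ := ω ∧ dτ + κ · dω ∧ τ`. -/
def triangle {m : ℕ} (ω : Form m 1) (κ : ℂ) {r : ℕ} (τ : Form m r) : Form m (r + 2) :=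
  castF (by omega) (wedge ω (extd τ)) + κ • castF (by omega) (wedge (extd ω) τ)

end

/-! Contract the unfolding equation with `R`. Since `i_R ω = 0`, Cartan's formula together with
Euler's identity gives `i_R dω = e ω`, and Euler's identity gives `i_R dh = a h`. The contracted
equation thus reads `a e h ω = -e (i_R η - a h) ω`, i.e. `e (i_R η) ω = 0`, and as `ω ≠ 0` and `S`
is a domain, `i_R η = 0`. -/

section Forms

variable {m : ℕ}

lemma form_zero_apply (h : Form m 0) (f : Fin 0 → Fin m) : h f = h Fin.elim0 :=
  congrArg h (Subsingleton.elim _ _)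

lemma form_one_apply (ω : Form m 1) (f : Fin 1 → Fin m) : ω f = ω fun _ => f 0 :=
  congrArg ω (funext fun i => by rw [Subsingleton.elim i 0])

@[simp]
lemma extd_zero {r : ℕ} : extd (0 : Form m r) = 0 := by
  ext1 f
  simp [extd]

lemma extd_zero_apply (h : Form m 0) (f : Fin 1 → Fin m) :
    extd h f = pderiv (f 0) (h Fin.elim0) := by
  simp [extd, form_zero_apply h]

lemma extd_one_apply (ω : Form m 1) (f : Fin 2 → Fin m) :
    extd ω f = pderiv (f 0) (ω fun _ => f 1) - pderiv (f 1) (ω fun _ => f 0) := by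
  simp [extd, Fin.sum_univ_two, form_one_apply ω, sub_eq_add_neg]

lemma extd_one_comp_swap (ω : Form m 1) (f : Fin 2 → Fin m) :
    extd ω (f ∘ Equiv.swap 0 1) = -extd ω f := by
  simp [extd_one_apply]

lemma ctr_smul {r : ℕ} (c : ℂ) (τ : Form m (r + 1)) : ctr (c • τ) = c • ctr τ := by
  ext1 f
  simp [ctr, Finset.smul_sum]

lemma ctr_sub {r : ℕ} (τ σ : Form m (r + 1)) : ctr (τ - σ) = ctr τ - ctr σ := by
  ext1 f
  simp [ctr, mul_sub]

lemma sum_perm_fin_two {M : Type*} [AddCommMonoid M] (g : Equiv.Perm (Fin 2) → M) :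
    ∑ π, g π = g 1 + g (Equiv.swap 0 1) := by
  rw [show (Finset.univ : Finset (Equiv.Perm (Fin 2))) = {1, Equiv.swap 0 1} by decide,
    Finset.sum_pair (by decide)]

lemma wedge_one_one_apply (α β : Form m 1) (f : Fin 2 → Fin m) :
    wedge α β f = α (fun _ => f 0) * β (fun _ => f 1) - α (fun _ => f 1) * β (fun _ => f 0) := by
  simp [wedge, sum_perm_fin_two, form_one_apply α, form_one_apply β, sub_eq_add_neg]

lemma wedge_zero_two_apply (h : Form m 0) (τ : Form m 2)
    (hτ : ∀ f, τ (f ∘ Equiv.swap 0 1) = -τ f) (f : Fin 2 → Fin m) :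
    wedge h τ f = h Fin.elim0 * τ f := by
  have hswap := hτ f
  simp only [Function.comp_def] at hswap
  simp [wedge, sum_perm_fin_two, form_zero_apply h, hswap]
  module

lemma ctr_wedge_one_one_apply (α β : Form m 1) (f : Fin 1 → Fin m) :
    ctr (wedge α β) f = ctr α Fin.elim0 * β f - ctr β Fin.elim0 * α f := by
  simp only [ctr, wedge_one_one_apply, form_one_apply α, form_one_apply β, Fin.cons_zero,
    Fin.cons_one, Finset.sum_mul, ← Finset.sum_sub_distrib]
  exact Finset.sum_congr rfl fun j _ => by ring

lemma ctr_wedge_zero_two_apply (h : Form m 0) (τ : Form m 2)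
    (hτ : ∀ f, τ (f ∘ Equiv.swap 0 1) = -τ f) (f : Fin 1 → Fin m) :
    ctr (wedge h τ : Form m 2) f = h Fin.elim0 * ctr τ f := by
  simp [ctr, wedge_zero_two_apply h τ hτ, Finset.mul_sum, mul_left_comm]

lemma ctr_extd_zero_of_isHomog {a : ℕ} {h : Form m 0} (hh : IsHomog 0 a h) :
    ctr (extd h) = a • h := by
  ext1 f
  simpa [ctr, extd_zero_apply, form_zero_apply h] using (hh Fin.elim0).sum_X_mul_pderiv

lemma pderiv_sum_X_mul (p : Fin m → MvPolynomial (Fin m) ℂ) (k : Fin m) :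
    pderiv k (∑ j, X j * p j) = p k + ∑ j, X j * pderiv k (p j) := by
  simp [Derivation.leibniz, Finset.sum_add_distrib, Pi.single_apply, add_comm]

lemma ctr_extd_add_extd_ctr_of_isHomog {e : ℕ} {ω : Form m 1} (hω : IsHomog 1 e ω)
    (he : 1 ≤ e) :
    ctr (extd ω) + extd (ctr ω) = e • ω := by
  ext1 f
  obtain ⟨d, rfl⟩ := Nat.exists_eq_add_of_le' he
  have euler := (hω fun _ => f 0).sum_X_mul_pderiv
  simp only [Pi.add_apply, Pi.smul_apply, ctr, extd_one_apply, extd_zero_apply, form_one_apply ω,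
    Fin.cons_zero, Fin.cons_one, pderiv_sum_X_mul, mul_sub, Finset.sum_sub_distrib]
  rw [euler, Nat.add_sub_cancel, succ_nsmul]
  abel

end Forms

theorem unfolding_is_radial_general {m a e : ℕ} (he : 1 ≤ e)
    (ω : Form m 1) (hω : IsHomog 1 e ω) (hωR : ctr ω = 0) (hωne : ω ≠ 0)
    (h : Form m 0) (η : Form m 1) (hh : IsHomog 0 a h)
    (heq : (a : ℂ) • wedge h (extd ω) = (e : ℂ) • wedge ω (η - extd h)) :
    ctr η = 0 := by
  have hdω : ctr (extd ω) = e • ω := by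
    simpa [hωR] using ctr_extd_add_extd_ctr_of_isHomog hω he
  obtain ⟨k, hk⟩ : ∃ k, (ω fun _ => k) ≠ 0 := by
    obtain ⟨f, hf⟩ := Function.ne_iff.mp hωne
    exact ⟨f 0, by rwa [← form_one_apply ω f]⟩
  have hcontr := congrFun (congrArg ctr heq) fun _ => k
  simp only [ctr_smul, ctr_sub, Pi.smul_apply, Pi.sub_apply, Pi.zero_apply, zero_mul,
    ctr_wedge_zero_two_apply h _ (extd_one_comp_swap ω), ctr_wedge_one_one_apply, hdω, hωR,
    ctr_extd_zero_of_isHomog hh] at hcontr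
  simp only [Nat.cast_smul_eq_nsmul, nsmul_eq_mul] at hcontr
  have hρ : ctr η Fin.elim0 = 0 := by
    have : (e : MvPolynomial (Fin m) ℂ) * (ctr η Fin.elim0 * ω fun _ => k) = 0 := by
      linear_combination hcontr
    simpa [hk, show e ≠ 0 by omega] using this
  funext f
  rw [form_zero_apply (ctr η) f, hρ, Pi.zero_apply]

/-- a graded projective unfolding `(h,η)` of `ω` in degree `a`
(i.e. `a·h·dω = e·ω∧(η−dh)`) satisfies `i_R η = 0`. -/
theorem unfolding_is_radial {m a e : ℕ} (he : 1 ≤ e)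
    (ω : Form m 1) (hω : IsHomog 1 e ω) (hωR : ctr ω = 0) (hωne : ω ≠ 0)
    (h : Form m 0) (η : Form m 1) (hh : IsHomog 0 a h) (hη : IsHomog 1 a η)
    (heq : (a : ℂ) • wedge h (extd ω) = (e : ℂ) • wedge ω (η - extd h)) :
    ctr η = 0 :=
  unfolding_is_radial_general he ω hω hωR hωne h η hh heq
end

section
/- Let ω be an integrable homogeneous 1-form of degree e with i_R ω = 0, and suppose ω is irreducible in the sense that whenever ω ∧ θ = 0 for a 1-form θ, there exists a polynomial f with θ = f·ω. Then the projection π₁ : 𝕌(ω) → I(ω), (h,η) ↦ h, from the module of graded projective unfoldings to the unfolding ideal, is an isomorphism of graded abelian groups. -/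
open MvPolynomial Finset

/-!
An unfolding `(h, η)` of degree `a` is determined by `h` up to `S·ω`: since `e ≠ 0`, two
choices of `η` have the same `ω ∧ η`, so they differ by a multiple of `ω` by irreducibility.
Conversely, if `h · dω = ω ∧ θ`, comparing homogeneous components (`ω` is homogeneous) lets us
replace `θ` by its component of degree `a - 1`, and then `η := (a / e) · θ + dh` is an unfolding.
-/

attribute [local instance] MvPolynomial.gradedAlgebra in
theorem MvPolynomial.IsHomogeneous.homogeneousComponent_mul {σ R : Type*} [CommSemiring R]
    {p : MvPolynomial σ R} {i : ℕ} (hp : p.IsHomogeneous i) (j : ℕ) (q : MvPolynomial σ R) :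
    homogeneousComponent (i + j) (p * q) = p * homogeneousComponent j q := by
  simpa [← decomposition.decompose'_apply] using
    DirectSum.coe_decompose_mul_add_of_left_mem (𝒜 := homogeneousSubmodule σ R) (b := q)
      (j := j) hp

theorem MvPolynomial.IsHomogeneous.smul {σ R S : Type*} [CommSemiring R] [SMulZeroClass S R]
    {φ : MvPolynomial σ R} {n : ℕ} (hφ : φ.IsHomogeneous n) (c : S) :
    (c • φ).IsHomogeneous n :=
  fun d hd => hφ fun h0 => hd (by rw [coeff_smul, h0, smul_zero])

section Forms

variable {m r s : ℕ}

theorem wedge_zero (τ : Form m r) : wedge τ (0 : Form m s) = 0 := by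
  funext f
  simp [wedge]

theorem wedge_sub (τ : Form m r) (σ₁ σ₂ : Form m s) :
    wedge τ (σ₁ - σ₂) = wedge τ σ₁ - wedge τ σ₂ := by
  funext f
  simp [wedge, mul_sub, smul_sub, Finset.sum_sub_distrib]

theorem wedge_smul (c : ℂ) (τ : Form m r) (σ : Form m s) :
    wedge τ (c • σ) = c • wedge τ σ := by
  funext f
  simp only [wedge, Pi.smul_apply, mul_smul_comm, Finset.smul_sum]
  exact Finset.sum_congr rfl fun _ _ => by rw [smul_comm c, smul_comm c]

theorem extd_isHomogeneous {n : ℕ} {τ : Form m r} (hτ : ∀ g, (τ g).IsHomogeneous n)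
    (f : Fin (r + 1) → Fin m) : (extd τ f).IsHomogeneous (n - 1) :=
  IsHomogeneous.sum _ _ _ fun _ _ => (hτ _).pderiv.smul _

theorem extd_eq_zero_of_isHomogeneous_zero {τ : Form m r} (hτ : ∀ g, (τ g).IsHomogeneous 0) :
    extd τ = 0 := by
  funext f
  refine Finset.sum_eq_zero fun i _ => ?_
  rw [← homogeneousComponent_eq_self (hτ _), homogeneousComponent_zero, pderiv_C, smul_zero]

theorem wedge_isHomogeneous {p q : ℕ} {τ : Form m r} {σ : Form m s}
    (hτ : ∀ g, (τ g).IsHomogeneous p) (hσ : ∀ g, (σ g).IsHomogeneous q)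
    (f : Fin (r + s) → Fin m) : (wedge τ σ f).IsHomogeneous (p + q) :=
  IsHomogeneous.smul (IsHomogeneous.sum _ _ _ fun _ _ =>
    ((hτ _).mul (hσ _)).smul _) _

theorem homogeneousComponent_wedge {d : ℕ} {τ : Form m r} (hτ : ∀ g, (τ g).IsHomogeneous d)
    (σ : Form m s) (n : ℕ) (f : Fin (r + s) → Fin m) :
    homogeneousComponent (d + n) (wedge τ σ f)
      = wedge τ (fun g => homogeneousComponent n (σ g)) f := by
  simp only [wedge, map_smul, map_sum, map_zsmul, (hτ _).homogeneousComponent_mul]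

theorem eq_wedge_homogeneousComponent {d n : ℕ} {τ : Form m r} {σ : Form m s}
    {ζ : Form m (r + s)} (hτ : ∀ g, (τ g).IsHomogeneous d)
    (hζ : ∀ g, (ζ g).IsHomogeneous (d + n)) (h : ζ = wedge τ σ) :
    ζ = wedge τ (fun g => homogeneousComponent n (σ g)) := by
  funext f
  rw [← homogeneousComponent_wedge hτ, ← h, homogeneousComponent_eq_self (hζ f)]

end Forms

section Unfoldings

variable {m a e : ℕ} {ω : Form m 1}

theorem wedge_extd_isHomogeneous (he : 1 ≤ e) (ha : 1 ≤ a) (hω : IsHomog 1 e ω)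
    {h : Form m 0} (hh : IsHomog 0 a h) (f : Fin 2 → Fin m) :
    (wedge h (extd ω) f).IsHomogeneous ((e - 1) + (a - 1)) := by
  obtain rfl | he := he.eq_or_lt
  · rw [extd_eq_zero_of_isHomogeneous_zero hω, wedge_zero]
    exact isHomogeneous_zero _ _ _
  · convert wedge_isHomogeneous hh (extd_isHomogeneous hω) f using 1
    omega

theorem exists_unfolding_of_wedge_extd_eq (he : 1 ≤ e) (ha : 1 ≤ a) (hω : IsHomog 1 e ω)
    {h : Form m 0} (hh : IsHomog 0 a h) {θ : Form m 1} (hθ : wedge h (extd ω) = wedge ω θ) :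
    ∃ η : Form m 1, IsHomog 1 a η ∧
      (a : ℂ) • wedge h (extd ω) = (e : ℂ) • wedge ω (η - extd h) := by
  have hθ' : wedge h (extd ω) = wedge ω (fun g => homogeneousComponent (a - 1) (θ g)) :=
    -- the ranks are pinned because unification would otherwise split `0 + 2` as `r = 0`
    eq_wedge_homogeneousComponent (r := 1) (s := 1) hω (wedge_extd_isHomogeneous he ha hω hh) hθ
  refine ⟨((a : ℂ) / e) • (fun g => homogeneousComponent (a - 1) (θ g)) + extd h,
    fun f => ?_, ?_⟩
  · exact ((homogeneousComponent_isHomogeneous _ _).smul _).add (extd_isHomogeneous hh f)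
  · have he' : (e : ℂ) ≠ 0 := by exact_mod_cast (by omega : e ≠ 0)
    rw [add_sub_cancel_right, wedge_smul, ← hθ', smul_smul, mul_div_cancel₀ _ he']

theorem wedge_sub_eq_zero_of_unfoldings (he : e ≠ 0) {h : Form m 0} {η₁ η₂ : Form m 1}
    (h₁ : (a : ℂ) • wedge h (extd ω) = (e : ℂ) • wedge ω (η₁ - extd h))
    (h₂ : (a : ℂ) • wedge h (extd ω) = (e : ℂ) • wedge ω (η₂ - extd h)) :
    wedge ω (η₁ - η₂) = 0 := by
  have he' : (e : ℂ) ≠ 0 := by exact_mod_cast he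
  have h₁₂ : wedge ω (η₁ - extd h) = wedge ω (η₂ - extd h) :=
    smul_right_injective _ he' (h₁.symm.trans h₂)
  rw [← sub_sub_sub_cancel_right η₁ η₂ (extd h), wedge_sub, h₁₂, sub_self]

end Unfoldings

theorem unfoldings_iso_ideal_general {m a e : ℕ} (he : 1 ≤ e) (ha : 1 ≤ a)
    (ω : Form m 1) (hω : IsHomog 1 e ω)
    (hirr : ∀ θ : Form m 1, wedge ω θ = 0 → ∃ f : Form m 0, θ = wedge f ω) :
    (∀ h : Form m 0, IsHomog 0 a h →
      (∃ θ : Form m 1, wedge h (extd ω) = wedge ω θ) →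
      ∃ η : Form m 1, IsHomog 1 a η ∧
        (a : ℂ) • wedge h (extd ω) = (e : ℂ) • wedge ω (η - extd h)) ∧
    (∀ (h : Form m 0) (η₁ η₂ : Form m 1), IsHomog 0 a h →
      IsHomog 1 a η₁ → IsHomog 1 a η₂ →
      (a : ℂ) • wedge h (extd ω) = (e : ℂ) • wedge ω (η₁ - extd h) →
      (a : ℂ) • wedge h (extd ω) = (e : ℂ) • wedge ω (η₂ - extd h) →
      ∃ f : Form m 0, η₁ - η₂ = wedge f ω) :=
  ⟨fun _ hh ⟨_, hθ⟩ => exists_unfolding_of_wedge_extd_eq he ha hω hh hθ,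
    fun _ _ _ _ _ _ h₁ h₂ => hirr _ (wedge_sub_eq_zero_of_unfoldings (by omega) h₁ h₂)⟩

/-- for an irreducible integrable `ω`, the projection
`π₁ : 𝕌(ω) → I(ω)`, `(h,η) ↦ h`, is an isomorphism of graded abelian groups:
in each degree `a` it is surjective onto `I(ω)(a)` and injective (two unfoldings
with the same first coordinate differ by an element of `S·ω`). -/
theorem unfoldings_iso_ideal {m a e : ℕ} (he : 1 ≤ e) (ha : 1 ≤ a)
    (ω : Form m 1) (hω : IsHomog 1 e ω) (hR : ctr ω = 0)
    (hint : wedge ω (extd ω) = 0)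
    (hirr : ∀ θ : Form m 1, wedge ω θ = 0 → ∃ f : Form m 0, θ = wedge f ω) :
    (∀ h : Form m 0, IsHomog 0 a h →
      (∃ θ : Form m 1, wedge h (extd ω) = wedge ω θ) →
      ∃ η : Form m 1, IsHomog 1 a η ∧
        (a : ℂ) • wedge h (extd ω) = (e : ℂ) • wedge ω (η - extd h)) ∧
    (∀ (h : Form m 0) (η₁ η₂ : Form m 1), IsHomog 0 a h →
      IsHomog 1 a η₁ → IsHomog 1 a η₂ →
      (a : ℂ) • wedge h (extd ω) = (e : ℂ) • wedge ω (η₁ - extd h) →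
      (a : ℂ) • wedge h (extd ω) = (e : ℂ) • wedge ω (η₂ - extd h) →
      ∃ f : Form m 0, η₁ - η₂ = wedge f ω) :=
  unfoldings_iso_ideal_general he ha ω hω hirr
end

section
/- Let ω_L = Σᵢ λᵢ Fᵢ dfᵢ where f₁,…,f_s are homogeneous polynomials of degrees d₁,…,d_s, Fᵢ = Π_{j≠i} f_j, and λᵢ ∈ ℂ satisfy Σλᵢdᵢ = 0. Then each Fᵢ belongs to the ideal I(ω_L) = {h : h·dω_L = ω_L ∧ θ for some 1-form θ}; explicitly, with e = Σdᵢ and bᵢ = e − dᵢ, the 1-form θᵢ = (bᵢ/(eλᵢ))·Σ_{j≠i}(λⱼ−λᵢ)F_{ji}dfⱼ + dFᵢ satisfies bᵢ·Fᵢ·dω_L = e·ω_L ∧ (θᵢ − dFᵢ), where F_{ji} = Π_{k≠j,i} f_k. -/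
open MvPolynomial Finset

noncomputable section
/-- The rational 1-form `ω_R = r·F·dG − s·G·dF`. -/
def omegaR {m : ℕ} (r s : ℕ) (F G : MvPolynomial (Fin m) ℂ) : Form m 1 :=
  (r : ℂ) • wedge (const F) (extd (const G)) - (s : ℂ) • wedge (const G) (extd (const F))

/-- `Fᵢ = Π_{j ≠ i} fⱼ`. -/
def Fi {m s : ℕ} (f : Fin s → MvPolynomial (Fin m) ℂ) (i : Fin s) :
    MvPolynomial (Fin m) ℂ := ∏ j ∈ Finset.univ.erase i, f j

/-- `F_{ji} = Π_{k ≠ j, i} f_k`. -/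
def Fji {m s : ℕ} (f : Fin s → MvPolynomial (Fin m) ℂ) (j i : Fin s) :
    MvPolynomial (Fin m) ℂ := ∏ k ∈ (Finset.univ.erase j).erase i, f k

/-- The logarithmic 1-form `ω_L = Σᵢ λᵢ Fᵢ dfᵢ`. -/
def omegaL {m s : ℕ} (lam : Fin s → ℂ) (f : Fin s → MvPolynomial (Fin m) ℂ) :
    Form m 1 :=
  ∑ i, lam i • wedge (const (Fi f i)) (extd (const (f i)))
end

/-! `ω_L = F·Σⱼ λⱼ dfⱼ/fⱼ` with `F = ∏ⱼ fⱼ` is `F` times a closed form, so `F·dω_L = dF ∧ ω_L`;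
and `T = Σ_{j≠i} (λⱼ−λᵢ) F_{ji} dfⱼ` satisfies `fᵢ·T = ω_L − λᵢ dF`. Hence
`fᵢ·(λᵢFᵢ dω_L − ω_L ∧ T) = λᵢ(F dω_L − dF ∧ ω_L) = 0`, and cancelling `fᵢ` (if `fᵢ = 0` then
`ω_L = 0`) gives `λᵢFᵢ dω_L = ω_L ∧ T`. Both claims are rescalings of this identity. -/

namespace MvPolynomial

variable {σ R ι : Type*} [CommRing R]

theorem pderiv_pderiv_comm (a b : σ) (p : MvPolynomial σ R) :
    pderiv a (pderiv b p) = pderiv b (pderiv a p) := by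
  induction p using MvPolynomial.induction_on' with
  | add p q hp hq => simp [hp, hq]
  | monomial n c =>
    rcases eq_or_ne a b with rfl | hab
    · rfl
    · simp only [pderiv_monomial]
      rw [Finsupp.tsub_apply, Finsupp.tsub_apply, Finsupp.single_eq_of_ne hab,
        Finsupp.single_eq_of_ne hab.symm, tsub_right_comm]
      congr 1
      simp only [Nat.sub_zero]
      ring

theorem pderiv_prod [DecidableEq ι] (x : σ) (t : Finset ι) (g : ι → MvPolynomial σ R) :
    pderiv x (∏ k ∈ t, g k) = ∑ k ∈ t, (∏ l ∈ t.erase k, g l) * pderiv x (g k) := by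
  induction t using Finset.induction_on with
  | empty => simp
  | insert a t ha ih =>
    have hcong : ∀ k ∈ t, (∏ l ∈ (insert a t).erase k, g l) * pderiv x (g k)
        = g a * ((∏ l ∈ t.erase k, g l) * pderiv x (g k)) := by
      intro k hk
      rw [Finset.erase_insert_of_ne (by rintro rfl; exact ha hk),
        Finset.prod_insert (fun h => ha (Finset.erase_subset _ _ h))]
      ring
    rw [Finset.sum_insert ha, Finset.erase_insert ha, Finset.sum_congr rfl hcong,
      ← Finset.mul_sum, ← ih, Finset.prod_insert ha, pderiv_mul]
    ring

/-- `F · d(h dg) = dF ∧ h dg` for `F = g h`, in coordinates: `h dg = F · dg/g` is `F` times a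
closed form. -/
theorem mul_mul_pderiv_sub_pderiv (g h : MvPolynomial σ R) (a b : σ) :
    g * h * (pderiv a (h * pderiv b g) - pderiv b (h * pderiv a g)) =
      pderiv a (g * h) * (h * pderiv b g) - pderiv b (g * h) * (h * pderiv a g) := by
  simp only [pderiv_mul]
  rw [pderiv_pderiv_comm a b]
  ring

end MvPolynomial

theorem eq_mul_div_mul_mul {K : Type*} [Field K] {b e l : K} (hl : l ≠ 0) (hb : e = 0 → b = 0) :
    b = e * (b / (e * l)) * l := by
  rcases eq_or_ne e 0 with he | he
  · simp [he, hb he]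
  · field_simp

section Forms

variable {m : ℕ}

theorem wedge_smul_right {r s : ℕ} (τ : Form m r) (c : ℂ) (σ : Form m s) :
    wedge τ (c • σ) = c • wedge τ σ := by
  funext g
  simp only [wedge, Pi.smul_apply, mul_smul_comm, Finset.smul_sum, smul_comm c]

theorem extd_const_apply (h : MvPolynomial (Fin m) ℂ) (g : Fin 1 → Fin m) :
    extd (const h) g = pderiv (g 0) h := by
  simp [extd, const]

theorem extd_apply (τ : Form m 1) (g : Fin 2 → Fin m) :
    extd τ g = pderiv (g 0) (τ fun _ => g 1) - pderiv (g 1) (τ fun _ => g 0) := by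
  have h0 : g ∘ (0 : Fin 2).succAbove = fun _ => g 1 := by
    funext j; fin_cases j; rfl
  have h1 : g ∘ (1 : Fin 2).succAbove = fun _ => g 0 := by
    funext j; fin_cases j; rfl
  unfold extd
  rw [Fin.sum_univ_two, h0, h1]
  simp [sub_eq_add_neg]

theorem wedge_const_apply (h : MvPolynomial (Fin m) ℂ) (τ : Form m 1) (g : Fin 1 → Fin m) :
    wedge (const h) τ g = h * τ g := by
  simp [wedge, const]

theorem wedge_apply (τ σ : Form m 1) (g : Fin 2 → Fin m) :
    wedge τ σ g = τ (fun _ => g 0) * σ (fun _ => g 1) - τ (fun _ => g 1) * σ (fun _ => g 0) := by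
  have hπ : (Finset.univ : Finset (Equiv.Perm (Fin 2))) = {1, Equiv.swap 0 1} := by decide
  have hl : ∀ π : Equiv.Perm (Fin 2), (fun i : Fin 1 => g (π (Fin.castAdd 1 i))) = fun _ => g (π 0) :=
    fun π => by funext i; fin_cases i; rfl
  have hr : ∀ π : Equiv.Perm (Fin 2), (fun j : Fin 1 => g (π (Fin.natAdd 1 j))) = fun _ => g (π 1) :=
    fun π => by funext j; fin_cases j; rfl
  simp only [wedge, hπ, hl, hr]
  rw [Finset.sum_pair (by decide)]
  simp [Equiv.Perm.sign_swap (by decide : (0 : Fin 2) ≠ 1)]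
  ring

theorem isAlt_extd (τ : Form m 1) : IsAlt (extd τ) := by
  intro g π
  have hπ : π = 1 ∨ π = Equiv.swap 0 1 := by revert π; decide
  rcases hπ with rfl | rfl
  · simp
  · simp [extd_apply, Equiv.Perm.sign_swap (by decide : (0 : Fin 2) ≠ 1)]

theorem wedge_const_apply_of_isAlt (h : MvPolynomial (Fin m) ℂ) {τ : Form m 2} (hτ : IsAlt τ)
    (g : Fin 2 → Fin m) : wedge (const h) τ g = h * τ g := by
  have hterm : ∀ π : Equiv.Perm (Fin 2), ((Equiv.Perm.sign π : ℤˣ) : ℤ) •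
      (const h (fun i => g (π (Fin.castAdd 2 i))) * τ (fun j => g (π (Fin.natAdd 0 j)))) =
      h * τ g := by
    intro π
    have hg : (fun j => g (π (Fin.natAdd 0 j))) = g ∘ π := by
      funext j; fin_cases j <;> rfl
    rw [hg, hτ, mul_smul_comm, smul_smul, Int.units_coe_mul_self]
    simp [const]
  simp only [wedge, hterm, Finset.sum_const, Finset.card_univ, Fintype.card_perm,
    Fintype.card_fin, ← Nat.cast_smul_eq_nsmul ℂ, smul_smul]
  norm_num [Nat.factorial]

end Forms

section LogarithmicForm

variable {m s : ℕ} (lam : Fin s → ℂ) (f : Fin s → MvPolynomial (Fin m) ℂ)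

noncomputable def omegaLReduced (i : Fin s) : Form m 1 :=
  ∑ j ∈ Finset.univ.erase i, (lam j - lam i) • wedge (const (Fji f j i)) (extd (const (f j)))

theorem omegaL_apply (g : Fin 1 → Fin m) :
    omegaL lam f g = ∑ j, lam j • (Fi f j * pderiv (g 0) (f j)) := by
  simp only [omegaL, Finset.sum_apply, Pi.smul_apply, wedge_const_apply, extd_const_apply]

theorem omegaLReduced_apply (i : Fin s) (g : Fin 1 → Fin m) :
    omegaLReduced lam f i g =
      ∑ j ∈ Finset.univ.erase i, (lam j - lam i) • (Fji f j i * pderiv (g 0) (f j)) := by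
  simp only [omegaLReduced, Finset.sum_apply, Pi.smul_apply, wedge_const_apply, extd_const_apply]

theorem mul_Fji {i j : Fin s} (h : j ≠ i) : f i * Fji f j i = Fi f j :=
  Finset.mul_prod_erase _ f (Finset.mem_erase.2 ⟨h.symm, Finset.mem_univ i⟩)

theorem mul_Fi (i : Fin s) : f i * Fi f i = ∏ j, f j :=
  Finset.mul_prod_erase _ f (Finset.mem_univ i)

theorem omegaL_eq_zero {i : Fin s} (hfi : f i = 0) : omegaL lam f = 0 := by
  funext g
  rw [omegaL_apply]
  refine Finset.sum_eq_zero fun j _ => ?_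
  rcases eq_or_ne j i with rfl | hji
  · simp [hfi]
  · rw [← mul_Fji f hji, hfi]
    simp

theorem wedge_const_prod_extd_omegaL :
    wedge (const (∏ j, f j)) (extd (omegaL lam f)) =
      wedge (extd (const (∏ j, f j))) (omegaL lam f) := by
  funext g
  simp only [wedge_const_apply_of_isAlt _ (isAlt_extd _), extd_apply, wedge_apply,
    extd_const_apply, omegaL_apply, map_sum, Finset.mul_sum, ← Finset.sum_sub_distrib]
  refine Finset.sum_congr rfl fun j _ => ?_
  simp only [Derivation.map_smul, mul_smul_comm, ← smul_sub, ← mul_Fi f j,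
    mul_mul_pderiv_sub_pderiv]

theorem wedge_const_omegaLReduced (i : Fin s) :
    wedge (const (f i)) (omegaLReduced lam f i) =
      omegaL lam f - lam i • extd (const (∏ j, f j)) := by
  funext g
  simp only [wedge_const_apply, omegaLReduced_apply, omegaL_apply, Pi.sub_apply, Pi.smul_apply,
    extd_const_apply, pderiv_prod]
  calc f i * ∑ j ∈ Finset.univ.erase i, (lam j - lam i) • (Fji f j i * pderiv (g 0) (f j))
      = ∑ j ∈ Finset.univ.erase i, (lam j - lam i) • (Fi f j * pderiv (g 0) (f j)) := by
        rw [Finset.mul_sum]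
        refine Finset.sum_congr rfl fun j hj => ?_
        rw [mul_smul_comm, ← mul_assoc, mul_Fji f (Finset.ne_of_mem_erase hj)]
    _ = ∑ j, (lam j - lam i) • (Fi f j * pderiv (g 0) (f j)) :=
        Finset.sum_erase _ (by simp)
    _ = _ := by simp only [sub_smul, Finset.sum_sub_distrib, Finset.smul_sum, Fi]

theorem smul_wedge_const_Fi_extd_omegaL (i : Fin s) :
    lam i • wedge (const (Fi f i)) (extd (omegaL lam f)) =
      wedge (omegaL lam f) (omegaLReduced lam f i) := by
  funext g
  simp only [Pi.smul_apply, wedge_const_apply_of_isAlt _ (isAlt_extd _), extd_apply, wedge_apply]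
  rcases eq_or_ne (f i) 0 with hfi | hfi
  · simp [omegaL_eq_zero lam f hfi]
  have hF := congrFun (wedge_const_prod_extd_omegaL lam f) g
  have hT : ∀ x, f i * omegaLReduced lam f i (fun _ => x) =
      omegaL lam f (fun _ => x) - lam i • pderiv x (∏ j, f j) := fun x => by
    simpa [wedge_const_apply, extd_const_apply] using
      congrFun (wedge_const_omegaLReduced lam f i) fun _ => x
  rw [wedge_const_apply_of_isAlt _ (isAlt_extd _), extd_apply, wedge_apply] at hF
  simp only [extd_const_apply] at hF
  apply mul_left_cancel₀ hfi
  simp only [← mul_Fi f i, smul_eq_C_mul] at hF hT ⊢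
  linear_combination C (lam i) * hF - omegaL lam f (fun _ => g 0) * hT (g 1) +
    omegaL lam f (fun _ => g 1) * hT (g 0)

end LogarithmicForm

theorem logarithmic_generators_in_ideal_general {m s : ℕ}
    (lam : Fin s → ℂ) (deg : Fin s → ℕ) (f : Fin s → MvPolynomial (Fin m) ℂ)
    (hlam0 : ∀ i, lam i ≠ 0) :
    ∀ i : Fin s,
      (∃ θ : Form m 1,
        wedge (const (Fi f i)) (extd (omegaL lam f)) = wedge (omegaL lam f) θ) ∧
      ((((∑ j, deg j) - deg i : ℕ) : ℂ) •
          wedge (const (Fi f i)) (extd (omegaL lam f)) =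
        ((∑ j, deg j : ℕ) : ℂ) • wedge (omegaL lam f)
          (((((∑ j, deg j) - deg i : ℕ) : ℂ) / (((∑ j, deg j : ℕ) : ℂ) * lam i)) •
              (∑ j ∈ Finset.univ.erase i,
                (lam j - lam i) • wedge (const (Fji f j i)) (extd (const (f j)))) +
            extd (const (Fi f i)) - extd (const (Fi f i)))) := by
  intro i
  have key := smul_wedge_const_Fi_extd_omegaL lam f i
  rw [← omegaLReduced, add_sub_cancel_right, wedge_smul_right, ← key, smul_smul, smul_smul]
  refine ⟨⟨(lam i)⁻¹ • omegaLReduced lam f i, ?_⟩, ?_⟩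
  · rw [wedge_smul_right, ← key, inv_smul_smul₀ (hlam0 i)]
  · congr 1
    refine eq_mul_div_mul_mul (hlam0 i) fun he => ?_
    rw [Nat.cast_eq_zero.1 he, Nat.zero_sub, Nat.cast_zero]

/-- for the logarithmic form `ω_L = Σ λᵢFᵢdfᵢ`, each `Fᵢ` lies in
`I(ω_L)`; explicitly, with `e = Σdᵢ`, `bᵢ = e − dᵢ` and
`θᵢ = (bᵢ/(eλᵢ))·Σ_{j≠i}(λⱼ−λᵢ)F_{ji}dfⱼ + dFᵢ`, one has
`bᵢ·Fᵢ·dω_L = e·ω_L ∧ (θᵢ − dFᵢ)`. -/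
theorem logarithmic_generators_in_ideal {m s : ℕ}
    (lam : Fin s → ℂ) (deg : Fin s → ℕ) (f : Fin s → MvPolynomial (Fin m) ℂ)
    (hdeg : ∀ i, 0 < deg i) (hf : ∀ i, (f i).IsHomogeneous (deg i))
    (hlam0 : ∀ i, lam i ≠ 0)
    (hres : ∑ i, lam i * (deg i : ℂ) = 0) :
    ∀ i : Fin s,
      (∃ θ : Form m 1,
        wedge (const (Fi f i)) (extd (omegaL lam f)) = wedge (omegaL lam f) θ) ∧
      ((((∑ j, deg j) - deg i : ℕ) : ℂ) •
          wedge (const (Fi f i)) (extd (omegaL lam f)) =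
        ((∑ j, deg j : ℕ) : ℂ) • wedge (omegaL lam f)
          (((((∑ j, deg j) - deg i : ℕ) : ℂ) / (((∑ j, deg j : ℕ) : ℂ) * lam i)) •
              (∑ j ∈ Finset.univ.erase i,
                (lam j - lam i) • wedge (const (Fji f j i)) (extd (const (f j)))) +
            extd (const (Fi f i)) - extd (const (Fi f i)))) :=
  logarithmic_generators_in_ideal_general lam deg f hlam0
end
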